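/- Hamilton–Jacobi PDE for the implicit-midpoint modified Hamiltonian of the harmonic oscillator (instance of Proposition 2(b)): for t ∈ (−π, π) with t ≠ 0, define Ĥ_MP(y,t) = (tan(t/2)/t)·(p² + q²) for y = (p,q). Then for all y ∈ ℝ² and all such t, ∂/∂t [t·Ĥ_MP(y,t)] = H(y + (t/2)·J⁻¹∇_y Ĥ_MP(y,t)), where H(y) = |y|²/2; explicitly, both sides equal ½·sec²(t/2)·(p² + q²). -/

import Mathlib

noncomputable section

/-- The time-dependent modified Hamiltonian of the implicit midpoint rule for the
harmonic oscillator. -/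
def HMP (p q t : ℝ) : ℝ := (Real.tan (t / 2) / t) * (p ^ 2 + q ^ 2)

/-!
Since `t · Ĥ_MP(y, t) = tan(t/2) |y|²`, the left-hand side is `½ sec²(t/2) |y|²`. The symplectic
gradient of `Ĥ_MP` is `(2 tan(t/2)/t) · (-q, p)`, so the argument of `H` is the rotation-like
vector `(p - tan(t/2) q, q + tan(t/2) p)`, whose squared norm is `(1 + tan²(t/2)) |y|²`.
-/

open Real

-- Also true at `t = 0`, where `tan 0 / 0 = 0`.
lemma mul_tan_half_div_self (t : ℝ) : t * (tan (t / 2) / t) = tan (t / 2) :=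
  mul_div_cancel_of_imp' fun ht => by simp [ht]

lemma HMP_comm (p q t : ℝ) : HMP p q t = HMP q p t := by
  rw [HMP, HMP, add_comm]

lemma mul_HMP (p q s : ℝ) : s * HMP p q s = tan (s / 2) * (p ^ 2 + q ^ 2) := by
  rw [HMP, ← mul_assoc, mul_tan_half_div_self]

lemma hasDerivAt_mul_HMP (p q : ℝ) {t : ℝ} (hcos : cos (t / 2) ≠ 0) :
    HasDerivAt (fun s => s * HMP p q s) (1 / 2 * (1 / cos (t / 2)) ^ 2 * (p ^ 2 + q ^ 2)) t := by
  simp_rw [mul_HMP]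
  have hhalf : HasDerivAt (fun s : ℝ => s / 2) (1 / 2) t := (hasDerivAt_id t).div_const 2
  rw [show 1 / 2 * (1 / cos (t / 2)) ^ 2 = 1 / cos (t / 2) ^ 2 * (1 / 2) by ring]
  exact ((hasDerivAt_tan hcos).comp t hhalf).mul_const _

lemma deriv_HMP_fst (p q t : ℝ) : deriv (fun P => HMP P q t) p = tan (t / 2) / t * (2 * p) := by
  unfold HMP
  have hsq : HasDerivAt (fun P : ℝ => P ^ 2 + q ^ 2) (2 * p) p := by
    simpa using (hasDerivAt_pow 2 p).add_const (q ^ 2)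
  exact (hsq.const_mul _).deriv

lemma deriv_HMP_snd (p q t : ℝ) : deriv (fun Q => HMP p Q t) q = tan (t / 2) / t * (2 * q) := by
  simp_rw [HMP_comm p]
  exact deriv_HMP_fst q p t

lemma sq_add_sq_rotate_tan {x : ℝ} (hcos : cos x ≠ 0) (p q : ℝ) :
    (p - tan x * q) ^ 2 + (q + tan x * p) ^ 2 = (1 / cos x) ^ 2 * (p ^ 2 + q ^ 2) := by
  rw [one_div, inv_pow, ← inv_one_add_tan_sq hcos, inv_inv]
  ring

theorem stmt12_general (t : ℝ) (ht : t ∈ Set.Ioo (-Real.pi) Real.pi) :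
    ∀ p q : ℝ,
      deriv (fun s => s * HMP p q s) t =
          ((p + (t / 2) * (-(deriv (fun Q => HMP p Q t) q))) ^ 2 +
            (q + (t / 2) * deriv (fun P => HMP P q t) p) ^ 2) / 2 ∧
        deriv (fun s => s * HMP p q s) t =
          (1 / 2) * (1 / Real.cos (t / 2)) ^ 2 * (p ^ 2 + q ^ 2) := by
  intro p q
  have hcos : cos (t / 2) ≠ 0 :=
    (cos_pos_of_mem_Ioo ⟨by linarith [ht.1], by linarith [ht.2]⟩).ne'
  have hderiv := (hasDerivAt_mul_HMP p q hcos).deriv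
  refine ⟨?_, hderiv⟩
  have hstep (x : ℝ) : t / 2 * (tan (t / 2) / t * (2 * x)) = tan (t / 2) * x := by
    calc t / 2 * (tan (t / 2) / t * (2 * x)) = t * (tan (t / 2) / t) * x := by ring
      _ = tan (t / 2) * x := by rw [mul_tan_half_div_self]
  rw [hderiv, deriv_HMP_fst, deriv_HMP_snd, mul_neg, hstep, hstep, ← sub_eq_add_neg,
    sq_add_sq_rotate_tan hcos]
  ring

/-- Hamilton–Jacobi PDE for the implicit-midpoint modified Hamiltonian of
the harmonic oscillator: for `t ∈ (−π, π)`, `t ≠ 0`, and `y = (p, q)`,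
`∂/∂t [t·Ĥ_MP(y,t)] = H(y + (t/2)·J⁻¹∇_yĤ_MP(y,t))` with `H(y) = |y|²/2` and
`J⁻¹∇Ĥ = (−∂Ĥ/∂q, ∂Ĥ/∂p)`; explicitly, both sides equal `½·sec²(t/2)·(p² + q²)`. -/
theorem stmt12 (t : ℝ) (ht : t ∈ Set.Ioo (-Real.pi) Real.pi) (ht0 : t ≠ 0) :
    ∀ p q : ℝ,
      deriv (fun s => s * HMP p q s) t =
          ((p + (t / 2) * (-(deriv (fun Q => HMP p Q t) q))) ^ 2 +
            (q + (t / 2) * deriv (fun P => HMP P q t) p) ^ 2) / 2 ∧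
        deriv (fun s => s * HMP p q s) t =
          (1 / 2) * (1 / Real.cos (t / 2)) ^ 2 * (p ^ 2 + q ^ 2) :=
  stmt12_general t ht
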